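/- arXiv:2311.10037 — 2 statements merged into one kernel-verified Lean document; each statement's English description precedes it below -/
import Mathlib

section
/- In the Bargmann–Fock space, the reproducing kernel property holds: for every β ∈ ℂ and every f ∈ F², ⟨e^{β̄ z}, f⟩_{F²} = f(β), where ⟨f,g⟩_{F²} = (1/π) ∫_ℂ conj(f(z)) g(z) e^{−|z|²} dz. -/
/-!
Substituting `z = w + β` turns the integrand into `e^{-|w|²} h(w)` with
`h(w) = e^{-β̄ w} f(w + β)`, an entire function with `h(0) = f(β)`. In polar coordinates the
mean value property of `h` on each circle gives
`∫ e^{-|w|²} h(w) dw = 2π h(0) ∫₀^∞ r e^{-r²} dr = π h(0)`. The integrand is integrable because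
it is a product of two functions in `L²(e^{-|z|²} dz)`.
-/

open MeasureTheory Complex Set

open scoped Real ComplexConjugate

theorem integrableOn_polarCoord_symm_smul {E : Type*} [NormedAddCommGroup E] [NormedSpace ℝ E]
    {f : ℝ × ℝ → E} (hf : Integrable f) :
    IntegrableOn (fun p : ℝ × ℝ => p.1 • f (polarCoord.symm p)) polarCoord.target := by
  have hsource : IntegrableOn f (polarCoord.symm '' polarCoord.target) := by
    rw [polarCoord.symm_image_target_eq_source]
    exact hf.integrableOn
  refine ((integrableOn_image_iff_integrableOn_abs_det_fderiv_smul volume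
    polarCoord.open_target.measurableSet
    (fun p _ => (hasFDerivAt_polarCoord_symm p).hasFDerivWithinAt) polarCoord.symm.injOn f).1
    hsource).congr_fun (fun p hp => ?_) polarCoord.open_target.measurableSet
  simp only [det_fderivPolarCoordSymm, abs_of_pos (show 0 < p.1 from hp.1)]

theorem Complex.integrableOn_polarCoord_symm_smul {E : Type*} [NormedAddCommGroup E]
    [NormedSpace ℝ E] {f : ℂ → E} (hf : Integrable f) :
    IntegrableOn (fun p : ℝ × ℝ => p.1 • f (Complex.polarCoord.symm p)) polarCoord.target :=
  _root_.integrableOn_polarCoord_symm_smul <|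
    (volume_preserving_equiv_real_prod.symm.integrable_comp_emb
      measurableEquivRealProd.symm.measurableEmbedding).2 hf

theorem Complex.polarCoord_symm_eq_circleMap (p : ℝ × ℝ) :
    Complex.polarCoord.symm p = circleMap 0 p.1 p.2 := by
  simp [circleMap, Complex.exp_mul_I]

theorem Differentiable.setIntegral_Ioo_circleMap {E : Type*} [NormedAddCommGroup E]
    [NormedSpace ℂ E] [CompleteSpace E] {h : ℂ → E} (hh : Differentiable ℂ h) (r : ℝ) :
    ∫ θ in Ioo (-π) π, h (circleMap 0 r θ) = (2 * π) • h 0 := by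
  have hmean : Real.circleAverage h 0 r = h 0 := hh.diffContOnCl.circleAverage
  have hper : Function.Periodic (fun θ => h (circleMap 0 r θ)) (2 * π) :=
    fun θ => by simp only [periodic_circleMap 0 r θ]
  rw [← integral_Ioc_eq_integral_Ioo,
    ← intervalIntegral.integral_of_le (by linarith [Real.pi_pos]), ← hmean,
    Real.circleAverage_def, smul_inv_smul₀ (by positivity)]
  simpa [show -π + 2 * π = π by ring] using hper.intervalIntegral_add_eq (-π) 0

theorem Differentiable.integral_radial_smul {E : Type*} [NormedAddCommGroup E]
    [NormedSpace ℂ E] [CompleteSpace E] {h : ℂ → E} (hh : Differentiable ℂ h) {w : ℝ → ℝ}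
    (hi : Integrable fun z : ℂ => w ‖z‖ • h z) :
    ∫ z : ℂ, w ‖z‖ • h z = (2 * π * ∫ r in Ioi 0, r * w r) • h 0 := by
  have hpolar := Complex.integrableOn_polarCoord_symm_smul hi
  rw [polarCoord_target, Measure.volume_eq_prod] at hpolar
  rw [← Complex.integral_comp_polarCoord_symm, polarCoord_target, Measure.volume_eq_prod,
    setIntegral_prod _ hpolar]
  calc ∫ r in Ioi 0, ∫ θ in Ioo (-π) π,
        (r, θ).1 • w ‖Complex.polarCoord.symm (r, θ)‖ • h (Complex.polarCoord.symm (r, θ))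
      = ∫ r in Ioi 0, (r * w r) • (2 * π) • h 0 := by
        refine setIntegral_congr_fun measurableSet_Ioi fun r (hr : 0 < r) => ?_
        simp only [Complex.polarCoord_symm_eq_circleMap, norm_circleMap_zero, abs_of_pos hr,
          smul_smul, integral_smul, hh.setIntegral_Ioo_circleMap]
    _ = (2 * π * ∫ r in Ioi 0, r * w r) • h 0 := by
        rw [integral_smul_const, smul_smul, mul_comm]

theorem integral_Ioi_mul_exp_neg_sq : ∫ r in Ioi (0 : ℝ), r * Real.exp (-r ^ 2) = 1 / 2 := by
  have h := integral_mul_cexp_neg_mul_sq (b := 1) (by norm_num)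
  apply Complex.ofReal_injective
  rw [← integral_complex_ofReal]
  push_cast
  simpa using h

theorem Differentiable.integral_exp_neg_sq_smul {E : Type*} [NormedAddCommGroup E]
    [NormedSpace ℂ E] [CompleteSpace E] {h : ℂ → E} (hh : Differentiable ℂ h)
    (hi : Integrable fun z : ℂ => Real.exp (-‖z‖ ^ 2) • h z) :
    ∫ z : ℂ, Real.exp (-‖z‖ ^ 2) • h z = π • h 0 := by
  rw [hh.integral_radial_smul (w := fun r => Real.exp (-r ^ 2)) hi, integral_Ioi_mul_exp_neg_sq]
  ring_nf

theorem MeasureTheory.Integrable.mul_mul_ofReal_of_sq_norm_mul {α : Type*} [MeasurableSpace α]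
    {μ : Measure α} {u v : α → ℂ} {ρ : α → ℝ} (hu : Integrable (fun x => ‖u x‖ ^ 2 * ρ x) μ)
    (hv : Integrable (fun x => ‖v x‖ ^ 2 * ρ x) μ) (hρ : ∀ x, 0 ≤ ρ x)
    (hm : AEStronglyMeasurable (fun x => u x * v x * (ρ x : ℂ)) μ) :
    Integrable (fun x => u x * v x * (ρ x : ℂ)) μ :=
  ((hu.add hv).div_const 2).mono' hm <| ae_of_all _ fun x => by
    rw [norm_mul, norm_mul, norm_real, Real.norm_of_nonneg (hρ x), Pi.add_apply]
    nlinarith [mul_le_mul_of_nonneg_right (two_mul_le_add_sq ‖u x‖ ‖v x‖) (hρ x)]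

theorem integrable_norm_exp_conj_mul_sq_mul_exp_neg_sq (β : ℂ) :
    Integrable fun z : ℂ => ‖cexp (conj β * z)‖ ^ 2 * Real.exp (-‖z‖ ^ 2) := by
  refine (GaussianFourier.integrable_cexp_neg_mul_sq_norm_add (V := ℂ) (b := 1) (by simp) 2
    β).norm.congr (ae_of_all _ fun z => ?_)
  simp only [Complex.norm_exp, ← Real.exp_nat_mul, ← Real.exp_add, Complex.inner]
  congr 1
  simp [mul_comm z, ← Complex.ofReal_pow]
  ring

theorem conj_exp_conj_mul_add_mul_exp_neg_sq (β w : ℂ) :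
    conj (cexp (conj β * (w + β))) * (Real.exp (-‖w + β‖ ^ 2) : ℂ) =
      cexp (-conj β * w) * (Real.exp (-‖w‖ ^ 2) : ℂ) := by
  simp only [← Complex.exp_conj, Complex.ofReal_exp, ← Complex.exp_add, Complex.ofReal_neg,
    Complex.ofReal_pow, ← Complex.mul_conj', map_mul, map_add, Complex.conj_conj]
  ring_nf

/-- Reproducing kernel property of the Bargmann–Fock space: for every `β ∈ ℂ` and every
entire `f` with `∫ |f(z)|² e^{−|z|²} dz < ∞`,
`(1/π) ∫ conj(e^{β̄ z}) f(z) e^{−|z|²} dz = f(β)`. -/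
theorem stmt13 (β : ℂ) (f : ℂ → ℂ) (hf : Differentiable ℂ f)
    (hf2 : Integrable (fun z : ℂ => ‖f z‖ ^ 2 * Real.exp (-‖z‖ ^ 2))) :
    (1 / (Real.pi : ℂ)) *
        ∫ z : ℂ, (starRingEnd ℂ) (Complex.exp ((starRingEnd ℂ) β * z)) * f z *
          (Real.exp (-‖z‖ ^ 2) : ℝ)
      = f β := by
  set G : ℂ → ℂ := fun z => conj (cexp (conj β * z)) * f z * (Real.exp (-‖z‖ ^ 2) : ℂ)
  set h : ℂ → ℂ := fun w => cexp (-conj β * w) * f (w + β)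
  have hh : Differentiable ℂ h := by fun_prop
  have hkernel :
      Integrable fun z : ℂ => ‖conj (cexp (conj β * z))‖ ^ 2 * Real.exp (-‖z‖ ^ 2) := by
    simpa only [Complex.norm_conj] using integrable_norm_exp_conj_mul_sq_mul_exp_neg_sq β
  have hG : Integrable G :=
    hkernel.mul_mul_ofReal_of_sq_norm_mul hf2 (fun _ => (Real.exp_pos _).le)
      (by have := hf.continuous; fun_prop)
  have hshift : (fun w => G (w + β)) = fun w => Real.exp (-‖w‖ ^ 2) • h w := by
    ext w
    simp only [G, h, Complex.real_smul]
    rw [mul_right_comm, conj_exp_conj_mul_add_mul_exp_neg_sq]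
    ring
  have hmean := hh.integral_exp_neg_sq_smul (hshift ▸ hG.comp_add_right β)
  rw [← integral_add_right_eq_self G β, hshift, hmean]
  simp [h]
end

section
/- For every k ≥ 2 and every s with 1 ≤ s ≤ k−1, the s-th iterated right commutator [∂_z^k, z^k]^{(s)} (defined by [A,B]^{(1)}=[A,B], [A,B]^{(s+1)}=[[A,B]^{(s)},B]), acting on polynomials, can be written as z^{k(s−1)} · ( c_{s,k−s} z^{k−s} ∂_z^{k−s} + Σ_{r=0}^{k−s−1} c_{s,r} z^r ∂_z^r ) for some nonnegative real coefficients c_{s,r} with c_{s,k−s} ≠ 0. -/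
/-- Differentiation `∂_z` as an endomorphism of `ℂ[z]`. -/
noncomputable def Dz : Module.End ℂ (Polynomial ℂ) := Polynomial.derivative

/-- Multiplication by `z` as an endomorphism of `ℂ[z]`. -/
noncomputable def Mz : Module.End ℂ (Polynomial ℂ) := LinearMap.mulLeft ℂ Polynomial.X

/-- The `s`-th iterated right commutator: `[A,B]^{(0)} = A`, `[A,B]^{(s+1)} = [[A,B]^{(s)}, B]`,
so that `[A,B]^{(1)} = [A,B]`. -/
def iterComm {M : Type*} [Ring M] (A B : M) : ℕ → M
  | 0 => A
  | s + 1 => iterComm A B s * B - B * iterComm A B s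

/-! Leibniz's rule gives `∂^r z^k = Σ_j C(r,j) k(k-1)⋯(k-r+j+1) z^(k-r+j) ∂^j`. Hence for
`r ≤ k` the commutator `[z^r ∂^r, z^k]` is `z^k` times a combination of the `z^j ∂^j`, `j < r`,
with natural coefficients, in which `z^(r-1) ∂^(r-1)` has coefficient `r k > 0`. Starting from
`[∂^k, z^k]` (order `k - 1`), each further commutator with `z^k` pulls out one more factor `z^k`
and lowers the order by one, keeping the top coefficient positive. -/

open Polynomial Finset

lemma Mz_pow_apply (n : ℕ) (p : ℂ[X]) : (Mz ^ n) p = X ^ n * p := by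
  rw [Mz, LinearMap.pow_mulLeft, LinearMap.mulLeft_apply]

lemma Dz_pow_apply (n : ℕ) (p : ℂ[X]) : (Dz ^ n) p = derivative^[n] p := by
  rw [Dz, Module.End.pow_apply]

lemma Dz_pow_mul_Mz_pow (r k : ℕ) :
    Dz ^ r * Mz ^ k = ∑ j ∈ range (r + 1),
      (r.choose j * k.descFactorial (r - j)) • (Mz ^ (k - (r - j)) * Dz ^ j) := by
  refine LinearMap.ext fun p => ?_
  simp only [Module.End.mul_apply, LinearMap.coe_sum, Finset.sum_apply, LinearMap.smul_apply,
    Mz_pow_apply, Dz_pow_apply, iterate_derivative_mul, iterate_derivative_X_pow_eq_smul]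
  refine sum_congr rfl fun j _ => ?_
  rw [smul_mul_assoc, Nat.cast_smul_eq_nsmul, mul_smul]

lemma commutator_Dz_pow_Mz_pow (k : ℕ) :
    Dz ^ k * Mz ^ k - Mz ^ k * Dz ^ k =
      ∑ j ∈ range k, (k.choose j * k.descFactorial (k - j)) • (Mz ^ j * Dz ^ j) := by
  rw [Dz_pow_mul_Mz_pow, sum_range_succ]
  simp only [Nat.choose_self, Nat.sub_self, Nat.descFactorial_zero, Nat.sub_zero, one_mul,
    one_smul, add_sub_cancel_right]
  refine sum_congr rfl fun j hj => ?_
  rw [Nat.sub_sub_self (mem_range.mp hj).le]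

lemma commutator_Mz_pow_mul_Dz_pow {r k : ℕ} (h : r ≤ k) :
    Mz ^ r * Dz ^ r * Mz ^ k - Mz ^ k * (Mz ^ r * Dz ^ r) =
      Mz ^ k * ∑ j ∈ range r, (r.choose j * k.descFactorial (r - j)) • (Mz ^ j * Dz ^ j) := by
  rw [mul_assoc, Dz_pow_mul_Mz_pow, sum_range_succ]
  simp only [Nat.choose_self, Nat.sub_self, Nat.descFactorial_zero, Nat.sub_zero, one_mul,
    one_smul, mul_add, ← mul_assoc, ← pow_add, Nat.add_comm r k, add_sub_cancel_right,
    mul_sum, mul_smul_comm]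
  refine sum_congr rfl fun j hj => ?_
  rw [show r + (k - (r - j)) = k + j by have := mem_range.mp hj; omega, pow_add, mul_assoc]

def HasNatNormalForm (n : ℕ) (T : Module.End ℂ ℂ[X]) : Prop :=
  ∃ c : ℕ → ℕ, c n ≠ 0 ∧ T = ∑ r ∈ range (n + 1), c r • (Mz ^ r * Dz ^ r)

lemma hasNatNormalForm_commutator_Dz_pow_Mz_pow {k : ℕ} (hk : 1 ≤ k) :
    HasNatNormalForm (k - 1) (Dz ^ k * Mz ^ k - Mz ^ k * Dz ^ k) := by
  refine ⟨fun j => k.choose j * k.descFactorial (k - j), ?_, ?_⟩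
  · have : 0 < k.choose (k - 1) := Nat.choose_pos (Nat.sub_le k 1)
    simp only [Nat.sub_sub_self hk, Nat.descFactorial_one]
    positivity
  · rw [commutator_Dz_pow_Mz_pow, Nat.sub_add_cancel hk]

lemma HasNatNormalForm.commutator_Mz_pow {n k : ℕ} {T : Module.End ℂ ℂ[X]}
    (hT : HasNatNormalForm (n + 1) T) (hnk : n + 1 ≤ k) :
    ∃ T', HasNatNormalForm n T' ∧ T * Mz ^ k - Mz ^ k * T = Mz ^ k * T' := by
  obtain ⟨c, hc, rfl⟩ := hT
  set a : ℕ → ℕ → ℕ := fun r j => r.choose j * k.descFactorial (r - j)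
  refine ⟨_, ⟨fun j => ∑ r ∈ Ioo j (n + 2), c r * a r j, ?_, rfl⟩, ?_⟩
  · have hIoo : Ioo n (n + 2) = {n + 1} := by ext; simp; omega
    have hk : k ≠ 0 := by omega
    simp only [hIoo, sum_singleton, a, Nat.choose_succ_self_right, Nat.add_sub_cancel_left,
      Nat.descFactorial_one]
    positivity
  calc (∑ r ∈ range (n + 2), c r • (Mz ^ r * Dz ^ r)) * Mz ^ k
        - Mz ^ k * ∑ r ∈ range (n + 2), c r • (Mz ^ r * Dz ^ r)
      = ∑ r ∈ range (n + 2), c r • (Mz ^ r * Dz ^ r * Mz ^ k - Mz ^ k * (Mz ^ r * Dz ^ r)) := by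
        simp only [sum_mul, mul_sum, ← sum_sub_distrib, smul_mul_assoc, mul_smul_comm, smul_sub]
    _ = ∑ r ∈ range (n + 2), c r • (Mz ^ k * ∑ j ∈ range r, a r j • (Mz ^ j * Dz ^ j)) :=
        sum_congr rfl fun r hr => by
          rw [commutator_Mz_pow_mul_Dz_pow (by have := mem_range.mp hr; omega)]
    _ = Mz ^ k * ∑ r ∈ range (n + 2), ∑ j ∈ range r, (c r * a r j) • (Mz ^ j * Dz ^ j) := by
        simp only [mul_sum, smul_sum, mul_smul_comm, mul_smul]
    _ = Mz ^ k * ∑ j ∈ range (n + 1), ∑ r ∈ Ioo j (n + 2), (c r * a r j) • (Mz ^ j * Dz ^ j) := by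
        rw [sum_comm' (t' := range (n + 1)) (s' := fun j => Ioo j (n + 2))
          fun r j => by simp only [mem_range, mem_Ioo]; omega]
    _ = _ := by simp only [sum_smul]

lemma exists_iterComm_Dz_pow_Mz_pow {k s : ℕ} (hs : s < k) :
    ∃ T, HasNatNormalForm (k - (s + 1)) T ∧
      iterComm (Dz ^ k) (Mz ^ k) (s + 1) = Mz ^ (k * s) * T := by
  induction s with
  | zero => exact ⟨_, hasNatNormalForm_commutator_Dz_pow_Mz_pow hs, by simp [iterComm]⟩
  | succ s ih =>
    obtain ⟨T, hT, hiter⟩ := ih (by omega)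
    rw [show k - (s + 1) = k - (s + 2) + 1 by omega] at hT
    obtain ⟨T', hT', hcomm⟩ := hT.commutator_Mz_pow (k := k) (by omega)
    refine ⟨T', hT', ?_⟩
    have hpow : Mz ^ k * Mz ^ (k * s) = Mz ^ (k * s) * Mz ^ k := ((Commute.refl Mz).pow_pow _ _).eq
    calc iterComm (Dz ^ k) (Mz ^ k) (s + 2)
        = Mz ^ (k * s) * T * Mz ^ k - Mz ^ k * (Mz ^ (k * s) * T) := by
          rw [← hiter]; rfl
      _ = Mz ^ (k * s) * (T * Mz ^ k - Mz ^ k * T) := by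
          rw [mul_sub, ← mul_assoc, hpow, mul_assoc, mul_assoc]
      _ = Mz ^ (k * (s + 1)) * T' := by rw [hcomm, ← mul_assoc, ← pow_add, Nat.mul_succ]

theorem stmt17_general (k : ℕ) (s : ℕ) (hs1 : 1 ≤ s) (hs2 : s ≤ k - 1) :
    ∃ c : ℕ → ℝ, (∀ r, 0 ≤ c r) ∧ c (k - s) ≠ 0 ∧
      iterComm (Dz ^ k) (Mz ^ k) s
        = Mz ^ (k * (s - 1)) *
            ∑ r ∈ Finset.range (k - s + 1), ((c r : ℝ) : ℂ) • (Mz ^ r * Dz ^ r) := by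
  obtain ⟨t, rfl⟩ : ∃ t, s = t + 1 := ⟨s - 1, by omega⟩
  obtain ⟨T, ⟨c, hc, rfl⟩, hiter⟩ := exists_iterComm_Dz_pow_Mz_pow (k := k) (s := t) (by omega)
  refine ⟨fun r => c r, fun r => Nat.cast_nonneg _, Nat.cast_ne_zero.mpr hc, ?_⟩
  simp only [hiter, Nat.add_sub_cancel, Complex.ofReal_natCast, Nat.cast_smul_eq_nsmul]

/-- For `k ≥ 2` and `1 ≤ s ≤ k−1`, the iterated commutator `[∂_z^k, z^k]^{(s)}` equals
`z^{k(s−1)} (c_{s,k−s} z^{k−s} ∂_z^{k−s} + Σ_{r<k−s} c_{s,r} z^r ∂_z^r)` for some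
nonnegative real coefficients with `c_{s,k−s} ≠ 0`. -/
theorem stmt17 (k : ℕ) (hk : 2 ≤ k) (s : ℕ) (hs1 : 1 ≤ s) (hs2 : s ≤ k - 1) :
    ∃ c : ℕ → ℝ, (∀ r, 0 ≤ c r) ∧ c (k - s) ≠ 0 ∧
      iterComm (Dz ^ k) (Mz ^ k) s
        = Mz ^ (k * (s - 1)) *
            ∑ r ∈ Finset.range (k - s + 1), ((c r : ℝ) : ℂ) • (Mz ^ r * Dz ^ r) :=
  stmt17_general k s hs1 hs2
end
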